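/- Let p be an odd prime and m ≥ 1 an integer, and let H be a closed subgroup of Sp₄(ℤ_p) (with the p-adic topology). Suppose that for every B ∈ sp₄(𝔽_p) there exists h ∈ H with h ≡ 1 + p^m·B̃ (mod p^{m+1}·M₄(ℤ_p)), where B̃ ∈ M₄(ℤ_p) is any lift of B. Then: (1) the same property holds with m replaced by any integer k ≥ m; (2) H contains every element of Sp₄(ℤ_p) that is congruent to the identity modulo p^m·M₄(ℤ_p). -/

import Mathlib

/-!
For odd `p` and `k ≥ 1`, the binomial theorem gives
`(1 + p^k A)^p ≡ 1 + p^(k+1) A  (mod p^(k+2))`, so `p`-th powers carry the elements of `H`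
witnessing fullness at level `k` to witnesses at level `k + 1`.

For `x ∈ Sp₄(ℤ_p)` with `x = 1 + p^j E`, expanding `xᵀ J x = J` shows that `E mod p` lies in
`sp₄(𝔽_p)`. Fullness at level `j` then gives `h ∈ H` with `x ≡ h (mod p^(j+1))`, and
`h⁻¹ x ∈ Sp₄(ℤ_p)` is `≡ 1 (mod p^(j+1))`. Iterating produces `g_n ∈ H` with
`x ≡ g_n (mod p^(m+n))`; these converge to `x`, which lies in `H` because `H` is closed.
-/

open Matrix

/-- The 4×4 matrix `J` given in 2×2 blocks by `[[0, I₂], [−I₂, 0]]`. -/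
def Jmat (R : Type*) [CommRing R] : Matrix (Fin 4) (Fin 4) R :=
  !![0, 0, 1, 0; 0, 0, 0, 1; -1, 0, 0, 0; 0, -1, 0, 0]

def Sp₄ (R : Type*) [CommRing R] : Set (Matrix (Fin 4) (Fin 4) R) :=
  {x | xᵀ * Jmat R * x = Jmat R}

def sp₄ (R : Type*) [CommRing R] : Set (Matrix (Fin 4) (Fin 4) R) :=
  {X | Xᵀ * Jmat R + Jmat R * X = 0}

theorem Nat.Prime.pow_add_two_dvd_choose_mul_pow {p k i : ℕ} (hp : p.Prime) (hp2 : p ≠ 2)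
    (hk : 1 ≤ k) (hi : 2 ≤ i) : p ^ (k + 2) ∣ p.choose i * p ^ (k * i) := by
  rcases lt_trichotomy i p with hlt | rfl | hgt
  · obtain ⟨c, hc⟩ := hp.dvd_choose_self (by omega) hlt
    rw [hc, mul_right_comm, ← pow_succ']
    exact Dvd.dvd.mul_right (pow_dvd_pow _ (by nlinarith)) _
  · have : 3 ≤ i := by have := hp.two_le; omega
    rw [Nat.choose_self, one_mul]
    exact pow_dvd_pow _ (by nlinarith)
  · simp [Nat.choose_eq_zero_of_lt hgt]

theorem exists_one_add_pow_smul_pow_prime_eq {R A : Type*} [CommSemiring R] [Semiring A]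
    [Algebra R A] {p k : ℕ} (hp : p.Prime) (hp2 : p ≠ 2) (hk : 1 ≤ k) (a : A) :
    ∃ e : A, (1 + ((p : R) ^ k) • a) ^ p
      = 1 + ((p : R) ^ (k + 1)) • a + ((p : R) ^ (k + 2)) • e := by
  have hterm : ∀ i, (((p : R) ^ k) • a) ^ i * (p.choose i : A)
      = ((p.choose i * p ^ (k * i) : ℕ) : R) • a ^ i := by
    intro i
    rw [smul_pow, ← Nat.cast_comm, ← nsmul_eq_mul, ← Nat.cast_smul_eq_nsmul R, smul_smul, pow_mul]
    push_cast
    ring_nf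
  have htwo : 2 ≤ p + 1 := by have := hp.two_le; omega
  refine ⟨∑ i ∈ Finset.Ico 2 (p + 1), ((p.choose i * p ^ (k * i) / p ^ (k + 2) : ℕ) : R) • a ^ i,
    ?_⟩
  rw [add_comm 1, (Commute.one_right _).add_pow, ← Finset.sum_range_add_sum_Ico _ htwo,
    Finset.sum_range_succ, Finset.sum_range_one, Finset.smul_sum]
  simp only [one_pow, mul_one, hterm]
  congr 1
  · simp [pow_succ']
  · refine Finset.sum_congr rfl fun i hi => ?_
    rw [smul_smul, ← Nat.cast_pow, ← Nat.cast_mul,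
      Nat.mul_div_cancel' (hp.pow_add_two_dvd_choose_mul_pow hp2 hk (Finset.mem_Ico.1 hi).1)]

section Symplectic

variable {R : Type*} [CommRing R]

theorem Jmat_map {S : Type*} [CommRing S] (f : R →+* S) : (Jmat R).map f = Jmat S := by
  ext i j
  fin_cases i <;> fin_cases j <;> simp [Jmat]

theorem det_Jmat : (Jmat R).det = 1 := by
  simp [Jmat, det_succ_row_zero, Fin.sum_univ_succ, Fin.succAbove]

theorem isUnit_of_mem_Sp₄ {x : Matrix (Fin 4) (Fin 4) R} (hx : x ∈ Sp₄ R) : IsUnit x := by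
  have hdet := congrArg det hx
  rw [det_mul, det_mul, det_transpose, det_Jmat, mul_one] at hdet
  exact (isUnit_iff_isUnit_det x).mpr (.of_mul_eq_one _ hdet)

theorem mem_Sp₄_of_mul_mem {h y : Matrix (Fin 4) (Fin 4) R} (hh : h ∈ Sp₄ R)
    (hhy : h * y ∈ Sp₄ R) : y ∈ Sp₄ R := by
  have : (h * y)ᵀ * Jmat R * (h * y) = yᵀ * (hᵀ * Jmat R * h) * y := by
    simp only [transpose_mul, Matrix.mul_assoc]
  change (h * y)ᵀ * Jmat R * (h * y) = Jmat R at hhy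
  rwa [this, hh] at hhy

theorem map_mem_sp₄_of_one_add_smul_mem_Sp₄ [IsDomain R] {S : Type*} [CommRing S] (f : R →+* S)
    {c : R} (hc : c ≠ 0) (hfc : f c = 0) {E : Matrix (Fin 4) (Fin 4) R}
    (h : 1 + c • E ∈ Sp₄ R) : E.map f ∈ sp₄ S := by
  have hexpand : (1 + c • E)ᵀ * Jmat R * (1 + c • E)
      = Jmat R + c • (Eᵀ * Jmat R + Jmat R * E + c • (Eᵀ * Jmat R * E)) := by
    simp only [transpose_add, transpose_one, transpose_smul, add_mul, mul_add, one_mul, mul_one,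
      smul_mul_assoc, mul_smul_comm, smul_smul, smul_add]
    module
  have hfirst : Eᵀ * Jmat R + Jmat R * E = -(c • (Eᵀ * Jmat R * E)) := by
    change _ = _ at h
    rw [hexpand, add_eq_left, smul_eq_zero] at h
    exact eq_neg_of_add_eq_zero_left (h.resolve_left hc)
  have hmap := congrArg f.mapMatrix hfirst
  simp only [map_add, map_mul, map_neg, RingHom.mapMatrix_apply,
    Matrix.map_smulₛₗ f f c (map_mul f c), hfc, zero_smul, neg_zero, transpose_map,
    Jmat_map] at hmap
  exact hmap

end Symplectic

section Padic

open Filter Topology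

variable {p : ℕ} [Fact p.Prime]

theorem exists_eq_map_val_toZMod_add_p_smul {ι κ : Type*} (E : Matrix ι κ ℤ_[p]) :
    ∃ F, E = (E.map PadicInt.toZMod).map (fun x => (x.val : ℤ_[p])) + (p : ℤ_[p]) • F := by
  have hdvd : ∀ i j, (p : ℤ_[p]) ∣ E i j - (PadicInt.toZMod (E i j)).val := fun i j => by
    rw [PadicInt.val_toZMod_eq_zmodRepr, ← Ideal.mem_span_singleton,
      ← PadicInt.maximalIdeal_eq_span_p]
    exact PadicInt.sub_zmodRepr_mem _
  choose F hF using hdvd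
  refine ⟨.of F, ?_⟩
  ext i j
  rw [Matrix.add_apply, map_apply, map_apply, Matrix.smul_apply, smul_eq_mul, of_apply, ← hF,
    add_sub_cancel]

theorem tendsto_of_forall_sub_eq_pow_smul {ι κ : Type*} {x : Matrix ι κ ℤ_[p]}
    {g : ℕ → Matrix ι κ ℤ_[p]} (h : ∀ n, ∃ E, x - g n = (p : ℤ_[p]) ^ n • E) :
    Tendsto g atTop (𝓝 x) := by
  choose E hE using h
  have hp : ‖(p : ℤ_[p])‖ < 1 := by
    rw [PadicInt.norm_p]
    exact inv_lt_one_of_one_lt₀ (Nat.one_lt_cast.2 (Fact.out : p.Prime).one_lt)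
  refine tendsto_pi_nhds.2 fun i => tendsto_pi_nhds.2 fun j => ?_
  rw [tendsto_iff_norm_sub_tendsto_zero]
  refine squeeze_zero (fun _ => norm_nonneg _) (fun n => ?_)
    (tendsto_pow_atTop_nhds_zero_of_lt_one (norm_nonneg _) hp)
  have hentry : x i j - g n i j = (p : ℤ_[p]) ^ n * E n i j := by
    simpa using congrFun (congrFun (hE n) i) j
  rw [norm_sub_rev, hentry, norm_mul, norm_pow]
  exact mul_le_of_le_one_right (by positivity) (PadicInt.norm_le_one _)

def IsFullAt (H : Submonoid (Matrix (Fin 4) (Fin 4) ℤ_[p])) (k : ℕ) : Prop :=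
  ∀ B ∈ sp₄ (ZMod p), ∃ h ∈ H, ∃ E : Matrix (Fin 4) (Fin 4) ℤ_[p],
    h = 1 + ((p : ℤ_[p]) ^ k) • B.map (fun x => (x.val : ℤ_[p])) + ((p : ℤ_[p]) ^ (k + 1)) • E

theorem IsFullAt.succ {H : Submonoid (Matrix (Fin 4) (Fin 4) ℤ_[p])} (hp : p ≠ 2) {k : ℕ}
    (hk : 1 ≤ k) (hH : IsFullAt H k) : IsFullAt H (k + 1) := by
  intro B hB
  obtain ⟨h, hh, E, rfl⟩ := hH B hB
  set B' := B.map (fun x => (x.val : ℤ_[p]))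
  obtain ⟨E', hE'⟩ :=
    exists_one_add_pow_smul_pow_prime_eq (R := ℤ_[p]) Fact.out hp hk (B' + (p : ℤ_[p]) • E)
  refine ⟨_, H.pow_mem hh p, E + E', ?_⟩
  have hbase : 1 + (p : ℤ_[p]) ^ k • B' + (p : ℤ_[p]) ^ (k + 1) • E
      = 1 + (p : ℤ_[p]) ^ k • (B' + (p : ℤ_[p]) • E) := by
    module
  rw [hbase, hE']
  module

theorem IsFullAt.of_le {H : Submonoid (Matrix (Fin 4) (Fin 4) ℤ_[p])} (hp : p ≠ 2) {m : ℕ}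
    (hm : 1 ≤ m) (hH : IsFullAt H m) {k : ℕ} (hk : m ≤ k) : IsFullAt H k := by
  induction k, hk using Nat.le_induction with
  | base => exact hH
  | succ k hmk ih => exact ih.succ hp (hm.trans hmk)

theorem exists_mem_eq_mul_of_isFullAt {H : Submonoid (Matrix (Fin 4) (Fin 4) ℤ_[p])}
    (hsp : (H : Set _) ⊆ Sp₄ ℤ_[p]) {j : ℕ} (hj : 1 ≤ j) (hH : IsFullAt H j)
    {E : Matrix (Fin 4) (Fin 4) ℤ_[p]} (hy : 1 + (p : ℤ_[p]) ^ j • E ∈ Sp₄ ℤ_[p]) :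
    ∃ h ∈ H, ∃ E', 1 + (p : ℤ_[p]) ^ j • E = h * (1 + (p : ℤ_[p]) ^ (j + 1) • E') ∧
      1 + (p : ℤ_[p]) ^ (j + 1) • E' ∈ Sp₄ ℤ_[p] := by
  have hpj : PadicInt.toZMod ((p : ℤ_[p]) ^ j) = 0 := by
    rw [map_pow, map_natCast, ZMod.natCast_self, zero_pow (by omega)]
  have hB := map_mem_sp₄_of_one_add_smul_mem_Sp₄ PadicInt.toZMod
    (pow_ne_zero _ (Nat.cast_ne_zero.2 (Fact.out : p.Prime).ne_zero)) hpj hy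
  obtain ⟨h, hh, E₁, hhE⟩ := hH _ hB
  obtain ⟨F, hF⟩ := exists_eq_map_val_toZMod_add_p_smul E
  have hu := isUnit_of_mem_Sp₄ (hsp hh)
  have hdiff : 1 + (p : ℤ_[p]) ^ j • E = h + (p : ℤ_[p]) ^ (j + 1) • (F - E₁) := by
    rw [hhE]
    conv_lhs => rw [hF]
    module
  have hsplit : 1 + (p : ℤ_[p]) ^ j • E
      = h * (1 + (p : ℤ_[p]) ^ (j + 1) • (Ring.inverse h * (F - E₁))) := by
    rw [hdiff, mul_add, mul_one, mul_smul_comm, ← Matrix.mul_assoc, Ring.mul_inverse_cancel _ hu,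
      Matrix.one_mul]
  exact ⟨h, hh, _, hsplit, mem_Sp₄_of_mul_mem (hsp hh) (hsplit ▸ hy)⟩

theorem exists_mem_eq_mul_of_forall_isFullAt {H : Submonoid (Matrix (Fin 4) (Fin 4) ℤ_[p])}
    (hsp : (H : Set _) ⊆ Sp₄ ℤ_[p]) {m : ℕ} (hm : 1 ≤ m)
    (hH : ∀ k, m ≤ k → IsFullAt H k) {E : Matrix (Fin 4) (Fin 4) ℤ_[p]}
    (hx : 1 + (p : ℤ_[p]) ^ m • E ∈ Sp₄ ℤ_[p]) (n : ℕ) :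
    ∃ g ∈ H, ∃ E', 1 + (p : ℤ_[p]) ^ m • E = g * (1 + (p : ℤ_[p]) ^ (m + n) • E') ∧
      1 + (p : ℤ_[p]) ^ (m + n) • E' ∈ Sp₄ ℤ_[p] := by
  induction n with
  | zero => exact ⟨1, H.one_mem, E, (Matrix.one_mul _).symm, hx⟩
  | succ n ih =>
    obtain ⟨g, hg, E', hxg, hE'⟩ := ih
    obtain ⟨h, hh, E'', hsplit, hE''⟩ :=
      exists_mem_eq_mul_of_isFullAt hsp (by omega) (hH _ (by omega)) hE'
    exact ⟨g * h, H.mul_mem hg hh, E'', by rw [hxg, hsplit, Matrix.mul_assoc, ← add_assoc], hE''⟩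

theorem mem_of_forall_isFullAt {H : Submonoid (Matrix (Fin 4) (Fin 4) ℤ_[p])}
    (hclosed : IsClosed (H : Set (Matrix (Fin 4) (Fin 4) ℤ_[p])))
    (hsp : (H : Set _) ⊆ Sp₄ ℤ_[p]) {m : ℕ} (hm : 1 ≤ m)
    (hH : ∀ k, m ≤ k → IsFullAt H k) {E : Matrix (Fin 4) (Fin 4) ℤ_[p]}
    (hx : 1 + (p : ℤ_[p]) ^ m • E ∈ Sp₄ ℤ_[p]) : 1 + (p : ℤ_[p]) ^ m • E ∈ H := by
  choose g hg E' hxg _ using exists_mem_eq_mul_of_forall_isFullAt hsp hm hH hx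
  refine hclosed.mem_of_tendsto (tendsto_of_forall_sub_eq_pow_smul fun n => ?_) (.of_forall hg)
  refine ⟨(p : ℤ_[p]) ^ m • (g n * E' n), ?_⟩
  rw [hxg, mul_add, mul_one, add_sub_cancel_left, mul_smul_comm, smul_smul, ← pow_add, add_comm]

end Padic

theorem closed_subgroup_full_filtration_general (p : ℕ) [Fact p.Prime] (hp : p ≠ 2)
    (m : ℕ) (hm : 1 ≤ m)
    (H : Set (Matrix (Fin 4) (Fin 4) ℤ_[p]))
    (hclosed : IsClosed H)
    (hone : (1 : Matrix (Fin 4) (Fin 4) ℤ_[p]) ∈ H)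
    (hmul : ∀ x ∈ H, ∀ y ∈ H, x * y ∈ H)
    (hsp : ∀ x ∈ H, xᵀ * Jmat ℤ_[p] * x = Jmat ℤ_[p])
    (hfull : ∀ B : Matrix (Fin 4) (Fin 4) (ZMod p),
      Bᵀ * Jmat (ZMod p) + Jmat (ZMod p) * B = 0 →
      ∃ h ∈ H, ∃ E : Matrix (Fin 4) (Fin 4) ℤ_[p],
        h = 1 + ((p : ℤ_[p]) ^ m) • B.map (fun x => (x.val : ℤ_[p]))
              + ((p : ℤ_[p]) ^ (m + 1)) • E) :
    (∀ k : ℕ, m ≤ k →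
      ∀ B : Matrix (Fin 4) (Fin 4) (ZMod p),
        Bᵀ * Jmat (ZMod p) + Jmat (ZMod p) * B = 0 →
        ∃ h ∈ H, ∃ E : Matrix (Fin 4) (Fin 4) ℤ_[p],
          h = 1 + ((p : ℤ_[p]) ^ k) • B.map (fun x => (x.val : ℤ_[p]))
                + ((p : ℤ_[p]) ^ (k + 1)) • E) ∧
    (∀ x : Matrix (Fin 4) (Fin 4) ℤ_[p],
      xᵀ * Jmat ℤ_[p] * x = Jmat ℤ_[p] →
      (∃ E : Matrix (Fin 4) (Fin 4) ℤ_[p], x = 1 + ((p : ℤ_[p]) ^ m) • E) →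
      x ∈ H) := by
  let S : Submonoid (Matrix (Fin 4) (Fin 4) ℤ_[p]) :=
    { carrier := H, mul_mem' := fun hx hy => hmul _ hx _ hy, one_mem' := hone }
  have hfullAt : ∀ k, m ≤ k → IsFullAt S k := fun k hk =>
    IsFullAt.of_le (H := S) hp hm hfull hk
  refine ⟨hfullAt, ?_⟩
  rintro x hx ⟨E, rfl⟩
  exact mem_of_forall_isFullAt (H := S) hclosed hsp hm hfullAt hx

/-- Let `H` be a closed subgroup of `Sp₄(ℤ_p)` such that for every `B ∈ sp₄(𝔽_p)`
there is `h ∈ H` with `h ≡ 1 + p^m·B̃ (mod p^{m+1})`. Then the same holds with `m`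
replaced by any `k ≥ m`, and `H` contains every element of `Sp₄(ℤ_p)` congruent to
the identity modulo `p^m`. -/
theorem closed_subgroup_full_filtration (p : ℕ) [Fact p.Prime] (hp : p ≠ 2)
    (m : ℕ) (hm : 1 ≤ m)
    (H : Set (Matrix (Fin 4) (Fin 4) ℤ_[p]))
    (hclosed : IsClosed H)
    (hone : (1 : Matrix (Fin 4) (Fin 4) ℤ_[p]) ∈ H)
    (hmul : ∀ x ∈ H, ∀ y ∈ H, x * y ∈ H)
    (hinv : ∀ x ∈ H, Ring.inverse x ∈ H)
    (hsp : ∀ x ∈ H, xᵀ * Jmat ℤ_[p] * x = Jmat ℤ_[p])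
    (hfull : ∀ B : Matrix (Fin 4) (Fin 4) (ZMod p),
      Bᵀ * Jmat (ZMod p) + Jmat (ZMod p) * B = 0 →
      ∃ h ∈ H, ∃ E : Matrix (Fin 4) (Fin 4) ℤ_[p],
        h = 1 + ((p : ℤ_[p]) ^ m) • B.map (fun x => (x.val : ℤ_[p]))
              + ((p : ℤ_[p]) ^ (m + 1)) • E) :
    (∀ k : ℕ, m ≤ k →
      ∀ B : Matrix (Fin 4) (Fin 4) (ZMod p),
        Bᵀ * Jmat (ZMod p) + Jmat (ZMod p) * B = 0 →
        ∃ h ∈ H, ∃ E : Matrix (Fin 4) (Fin 4) ℤ_[p],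
          h = 1 + ((p : ℤ_[p]) ^ k) • B.map (fun x => (x.val : ℤ_[p]))
                + ((p : ℤ_[p]) ^ (k + 1)) • E) ∧
    (∀ x : Matrix (Fin 4) (Fin 4) ℤ_[p],
      xᵀ * Jmat ℤ_[p] * x = Jmat ℤ_[p] →
      (∃ E : Matrix (Fin 4) (Fin 4) ℤ_[p], x = 1 + ((p : ℤ_[p]) ^ m) • E) →
      x ∈ H) :=
  closed_subgroup_full_filtration_general p hp m hm H hclosed hone hmul hsp hfull
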